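/- arXiv:2205.13599 — 2 statements merged into one kernel-verified Lean document; each statement's English description precedes it below -/
import Mathlib

section
/- (VectorAdam single step is rotation equivariant.) Let n ≥ 1, let f : ℝⁿ → ℝ be differentiable and rotation invariant, and fix hyperparameters α > 0, β₁, β₂ ∈ [0,1), ε > 0 and timestep t ≥ 1. Define one VectorAdam step on state (θ, m, v) ∈ ℝⁿ × ℝⁿ × ℝ by: g = ∇f(θ); m* = β₁m + (1−β₁)g; v* = β₂v + (1−β₂)‖g‖²₂; m̂ = m*/(1−β₁ᵗ); v̂ = v*/(1−β₂ᵗ); θ* = θ − α·m̂/(√v̂ + ε). If (θ', m', v') denotes the result of the same step applied to (Rθ, Rm, v) for a rotation R ∈ SO(n), then θ' = Rθ*, m' = Rm*, and v' = v*. -/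
/-! Rotation invariance `f ∘ R = f` makes the gradient equivariant, `∇f(Rθ) = R ∇f(θ)`; this
holds at every point, since composing with a linear isometry transports both Fréchet derivatives
and their failure. The rest of the step only uses linear operations on vectors and the norm of the
gradient, which `R` commutes with and preserves. -/

/-- One VectorAdam step on the state `(θ, m, v)` at timestep `t`:
`g = ∇f(θ)`, `m* = β₁m + (1−β₁)g`, `v* = β₂v + (1−β₂)‖g‖²`,
`m̂ = m*/(1−β₁ᵗ)`, `v̂ = v*/(1−β₂ᵗ)`, `θ* = θ − α·m̂/(√v̂ + ε)`. -/
noncomputable def vectorAdamStep (n : ℕ) (f : EuclideanSpace ℝ (Fin n) → ℝ)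
    (α β₁ β₂ ε : ℝ) (t : ℕ)
    (s : EuclideanSpace ℝ (Fin n) × EuclideanSpace ℝ (Fin n) × ℝ) :
    EuclideanSpace ℝ (Fin n) × EuclideanSpace ℝ (Fin n) × ℝ :=
  let g := gradient f s.1
  let mStar := β₁ • s.2.1 + (1 - β₁) • g
  let vStar := β₂ * s.2.2 + (1 - β₂) * ‖g‖ ^ 2
  let mHat := (1 - β₁ ^ t)⁻¹ • mStar
  let vHat := vStar / (1 - β₂ ^ t)
  (s.1 - (α / (Real.sqrt vHat + ε)) • mHat, mStar, vStar)

section Gradient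

variable {𝕜 F : Type*} [RCLike 𝕜] [NormedAddCommGroup F] [InnerProductSpace 𝕜 F]
  [CompleteSpace F]

theorem gradient_comp_linearIsometryEquiv (f : F → 𝕜) (R : F ≃ₗᵢ[𝕜] F) (x : F) :
    gradient (f ∘ R) x = R.symm (gradient f (R x)) := by
  apply (InnerProductSpace.toDual 𝕜 F).injective
  ext y
  rw [toDual_gradient, InnerProductSpace.toDual_apply_apply, R.symm.inner_map_eq_flip,
    R.symm_symm, ← InnerProductSpace.toDual_apply_apply, toDual_gradient]
  exact congrArg (· y) ((R : F ≃L[𝕜] F).comp_right_fderiv (f := f))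

theorem gradient_apply_of_comp_linearIsometryEquiv_eq {f : F → 𝕜} {R : F ≃ₗᵢ[𝕜] F}
    (hf : f ∘ R = f) (x : F) : gradient f (R x) = R (gradient f x) := by
  conv_rhs => rw [← hf, gradient_comp_linearIsometryEquiv, R.apply_symm_apply]

end Gradient

theorem vectorAdamStep_rotation_equivariant_general
    (n : ℕ)
    (f : EuclideanSpace ℝ (Fin n) → ℝ)
    (hinv : ∀ (R : EuclideanSpace ℝ (Fin n) ≃ₗᵢ[ℝ] EuclideanSpace ℝ (Fin n)),
      LinearMap.det R.toLinearEquiv.toLinearMap = 1 →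
      ∀ x : EuclideanSpace ℝ (Fin n), f (R x) = f x)
    (α β₁ β₂ ε : ℝ)
    (t : ℕ)
    (R : EuclideanSpace ℝ (Fin n) ≃ₗᵢ[ℝ] EuclideanSpace ℝ (Fin n))
    (hR : LinearMap.det R.toLinearEquiv.toLinearMap = 1)
    (θ m : EuclideanSpace ℝ (Fin n)) (v : ℝ) :
    vectorAdamStep n f α β₁ β₂ ε t (R θ, R m, v) =
      (R (vectorAdamStep n f α β₁ β₂ ε t (θ, m, v)).1,
       R (vectorAdamStep n f α β₁ β₂ ε t (θ, m, v)).2.1,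
       (vectorAdamStep n f α β₁ β₂ ε t (θ, m, v)).2.2) := by
  have hg : gradient f (R θ) = R (gradient f θ) :=
    gradient_apply_of_comp_linearIsometryEquiv_eq (funext (hinv R hR)) θ
  simp only [vectorAdamStep, hg, R.norm_map, ← map_smul, ← map_add, ← map_sub]

/-- A single VectorAdam step is rotation equivariant: applying the step to
`(Rθ, Rm, v)` yields `(Rθ*, Rm*, v*)` where `(θ*, m*, v*)` is the result of the
step on `(θ, m, v)`, for any rotation invariant differentiable objective `f`. -/
theorem vectorAdamStep_rotation_equivariant
    (n : ℕ) (hn : 1 ≤ n)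
    (f : EuclideanSpace ℝ (Fin n) → ℝ) (hf : Differentiable ℝ f)
    (hinv : ∀ (R : EuclideanSpace ℝ (Fin n) ≃ₗᵢ[ℝ] EuclideanSpace ℝ (Fin n)),
      LinearMap.det R.toLinearEquiv.toLinearMap = 1 →
      ∀ x : EuclideanSpace ℝ (Fin n), f (R x) = f x)
    (α β₁ β₂ ε : ℝ) (hα : 0 < α)
    (hβ₁ : β₁ ∈ Set.Ico (0 : ℝ) 1) (hβ₂ : β₂ ∈ Set.Ico (0 : ℝ) 1) (hε : 0 < ε)
    (t : ℕ) (ht : 1 ≤ t)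
    (R : EuclideanSpace ℝ (Fin n) ≃ₗᵢ[ℝ] EuclideanSpace ℝ (Fin n))
    (hR : LinearMap.det R.toLinearEquiv.toLinearMap = 1)
    (θ m : EuclideanSpace ℝ (Fin n)) (v : ℝ) :
    vectorAdamStep n f α β₁ β₂ ε t (R θ, R m, v) =
      (R (vectorAdamStep n f α β₁ β₂ ε t (θ, m, v)).1,
       R (vectorAdamStep n f α β₁ β₂ ε t (θ, m, v)).2.1,
       (vectorAdamStep n f α β₁ β₂ ε t (θ, m, v)).2.2) :=
  vectorAdamStep_rotation_equivariant_general n f hinv α β₁ β₂ ε t R hR θ m v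
end

section
/- (Effective step size bound for equal decay rates.) Let g₁, …, g_T ∈ ℝⁿ and let a₁, …, a_T ≥ 0 with a₁ + ⋯ + a_T ≤ 1. If m = Σₖ aₖ·gₖ and v = Σₖ aₖ·‖gₖ‖²₂, then ‖m‖₂ ≤ √v. Consequently, for any α > 0 and ε > 0, the VectorAdam-style update Δθ = −α·m/(√v + ε) satisfies ‖Δθ‖₂ ≤ α. -/
/-!
By the triangle inequality `‖m‖ ≤ Σ aₖ‖gₖ‖`, and Cauchy–Schwarz with the weights split as
`√aₖ · √aₖ‖gₖ‖` gives `(Σ aₖ‖gₖ‖)² ≤ (Σ aₖ)(Σ aₖ‖gₖ‖²) ≤ v`. Since `‖m‖ ≤ √v < √v + ε`, the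
factor `α / (√v + ε)` scales `m` to norm at most `α`.
-/

open Finset

section WeightedSum

variable {ι E : Type*} [SeminormedAddCommGroup E] [NormedSpace ℝ E]
  (s : Finset ι) (a : ι → ℝ) (g : ι → E)

theorem norm_sum_smul_sq_le (ha : ∀ k ∈ s, 0 ≤ a k) :
    ‖∑ k ∈ s, a k • g k‖ ^ 2 ≤ (∑ k ∈ s, a k) * ∑ k ∈ s, a k * ‖g k‖ ^ 2 := by
  have triangle : ‖∑ k ∈ s, a k • g k‖ ≤ ∑ k ∈ s, a k * ‖g k‖ :=
    (norm_sum_le _ _).trans_eq <| sum_congr rfl fun k hk => by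
      rw [norm_smul, Real.norm_of_nonneg (ha k hk)]
  calc ‖∑ k ∈ s, a k • g k‖ ^ 2 ≤ (∑ k ∈ s, a k * ‖g k‖) ^ 2 := by gcongr
    _ ≤ (∑ k ∈ s, a k) * ∑ k ∈ s, a k * ‖g k‖ ^ 2 :=
      sum_sq_le_sum_mul_sum_of_sq_le_mul s ha
        (fun k hk => mul_nonneg (ha k hk) (sq_nonneg _)) fun k _ => (by ring : _ = _).le

theorem norm_sum_smul_le_sqrt (ha : ∀ k ∈ s, 0 ≤ a k) (hsum : ∑ k ∈ s, a k ≤ 1) :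
    ‖∑ k ∈ s, a k • g k‖ ≤ √(∑ k ∈ s, a k * ‖g k‖ ^ 2) := by
  have hv : 0 ≤ ∑ k ∈ s, a k * ‖g k‖ ^ 2 :=
    sum_nonneg fun k hk => mul_nonneg (ha k hk) (sq_nonneg _)
  exact Real.le_sqrt_of_sq_le <|
    (norm_sum_smul_sq_le s a g ha).trans (mul_le_of_le_one_left hv hsum)

end WeightedSum

theorem norm_div_add_smul_le {E : Type*} [SeminormedAddCommGroup E] [NormedSpace ℝ E]
    {x : E} {r α ε : ℝ} (hx : ‖x‖ ≤ r) (hα : 0 ≤ α) (hε : 0 < ε) :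
    ‖(α / (r + ε)) • x‖ ≤ α := by
  have hr : 0 < r + ε := by linarith [norm_nonneg x]
  rw [norm_smul, Real.norm_of_nonneg (by positivity), div_mul_eq_mul_div,
    div_le_iff₀ hr]
  gcongr
  linarith

/-- Effective step size bound: if `m = Σₖ aₖ·gₖ` and `v = Σₖ aₖ·‖gₖ‖²` with
nonnegative weights summing to at most 1, then `‖m‖ ≤ √v`, and consequently the
update `Δθ = −α·m/(√v + ε)` satisfies `‖Δθ‖ ≤ α`. -/
theorem effective_step_size_bound
    (n T : ℕ)
    (g : Fin T → EuclideanSpace ℝ (Fin n))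
    (a : Fin T → ℝ) (ha : ∀ k, 0 ≤ a k) (hsum : ∑ k, a k ≤ 1)
    (m : EuclideanSpace ℝ (Fin n)) (hm : m = ∑ k, a k • g k)
    (v : ℝ) (hv : v = ∑ k, a k * ‖g k‖ ^ 2) :
    ‖m‖ ≤ Real.sqrt v ∧
    ∀ α ε : ℝ, 0 < α → 0 < ε →
      ‖(-(α / (Real.sqrt v + ε))) • m‖ ≤ α := by
  have hmv : ‖m‖ ≤ √v := by
    subst hm hv
    exact norm_sum_smul_le_sqrt univ a g (fun k _ => ha k) hsum
  refine ⟨hmv, fun α ε hα hε => ?_⟩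
  rw [neg_smul, norm_neg]
  exact norm_div_add_smul_le hmv hα.le hε
end
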